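/- arXiv:1707.02370 — 3 statements merged into one kernel-verified Lean document; each statement's English description precedes it below -/
import Mathlib

section
/- Let Σ_2 = { [[b11,b12],[b21,2b22]]·R : b_ij ∈ ℕ, 2 b11 b22 − b12 b21 = 1 } and Σ^2 = { R·[[2b11,b12],[b21,b22]] : b_ij ∈ ℕ, 2 b11 b22 − b12 b21 = 1 }, where R = [[1,1],[0,1]]. Let β̃ be the map sending [[a11,a12],[a21,a22]] to [[2a11+a21, a12−a11+(a22−a21)/2],[a21,(a22−a21)/2]]. Then β̃ maps Σ_2 bijectively onto Σ^2. -/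
/-- The map `β̃` on 2×2 real matrices. -/
noncomputable def betaTilde (M : Matrix (Fin 2) (Fin 2) ℝ) : Matrix (Fin 2) (Fin 2) ℝ :=
  !![2 * M 0 0 + M 1 0, M 0 1 - M 0 0 + (M 1 1 - M 1 0) / 2;
     M 1 0, (M 1 1 - M 1 0) / 2]

/-- The matrix `R = [[1,1],[0,1]]`. -/
def Rmat : Matrix (Fin 2) (Fin 2) ℝ := !![1, 1; 0, 1]

/-- `Σ_2 = { [[b11,b12],[b21,2b22]]·R : b_ij ∈ ℕ, 2 b11 b22 − b12 b21 = 1 }`. -/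
def SigmaLow : Set (Matrix (Fin 2) (Fin 2) ℝ) :=
  {M | ∃ b11 b12 b21 b22 : ℕ, 2 * b11 * b22 = b12 * b21 + 1 ∧
    M = !![(b11 : ℝ), b12; b21, 2 * b22] * Rmat}

/-- `Σ^2 = { R·[[2b11,b12],[b21,b22]] : b_ij ∈ ℕ, 2 b11 b22 − b12 b21 = 1 }`. -/
def SigmaUp : Set (Matrix (Fin 2) (Fin 2) ℝ) :=
  {M | ∃ b11 b12 b21 b22 : ℕ, 2 * b11 * b22 = b12 * b21 + 1 ∧
    M = Rmat * !![2 * (b11 : ℝ), b12; b21, b22]}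

lemma betaTilde_param (b11 b12 b21 b22 : ℕ) :
    betaTilde (!![(b11 : ℝ), b12; b21, 2 * b22] * Rmat) =
      Rmat * !![2 * (b11 : ℝ), b12; b21, b22] := by
  simp only [Rmat, Matrix.mul_fin_two, betaTilde]
  ext i j
  fin_cases i <;> fin_cases j <;> simp <;> ring

lemma betaTilde_inj : Function.Injective betaTilde := by
  intro M N h
  have h00 := congrFun (congrFun h 0) 0
  have h01 := congrFun (congrFun h 0) 1
  have h10 := congrFun (congrFun h 1) 0
  have h11 := congrFun (congrFun h 1) 1
  simp [betaTilde] at h00 h01 h10 h11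
  ext i j
  fin_cases i <;> fin_cases j <;> simp <;> linarith

theorem stmt6 : Set.BijOn betaTilde SigmaLow SigmaUp := by
  refine ⟨?_, betaTilde_inj.injOn, ?_⟩
  · rintro M ⟨b11, b12, b21, b22, h, rfl⟩
    exact ⟨b11, b12, b21, b22, h, betaTilde_param b11 b12 b21 b22⟩
  · rintro M ⟨b11, b12, b21, b22, h, rfl⟩
    exact ⟨!![(b11 : ℝ), b12; b21, 2 * b22] * Rmat,
      ⟨b11, b12, b21, b22, h, rfl⟩, betaTilde_param b11 b12 b21 b22⟩
end

section
/- With Σ_2, Σ^2, R as above and β̃ the map sending [[a11,a12],[a21,a22]] to [[2a11+a21, a12−a11+(a22−a21)/2],[a21,(a22−a21)/2]]: a matrix X with nonnegative integer entries and determinant 1 satisfies β̃^{-1}(X) ∈ SL_2(ℕ) if and only if X ∈ Σ^2. Equivalently, SL_2(ℕ) ∩ β̃^{-1}(SL_2(ℕ)) = Σ_2 read in the other direction: β̃(M) has nonnegative integer entries and determinant 1 for M ∈ SL_2(ℕ) precisely when M ∈ Σ_2. -/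
/-- The inverse of `β̃`. -/
noncomputable def betaTildeInv (M : Matrix (Fin 2) (Fin 2) ℝ) : Matrix (Fin 2) (Fin 2) ℝ :=
  !![(M 0 0 - M 1 0) / 2, (M 0 0 - M 1 0) / 2 + M 0 1 - M 1 1;
     M 1 0, M 1 0 + 2 * M 1 1]

/-- `SL_2(ℕ)`: 2×2 real matrices with nonnegative integer entries and determinant 1. -/
def SL2N : Set (Matrix (Fin 2) (Fin 2) ℝ) :=
  {M | (∀ i j, ∃ n : ℕ, M i j = (n : ℝ)) ∧ M.det = 1}

lemma sl2n_iff (M : Matrix (Fin 2) (Fin 2) ℝ) :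
    M ∈ SL2N ↔ ∃ a b c d : ℕ, M = !![(a : ℝ), b; c, d] ∧ a * d = b * c + 1 := by
  constructor
  · rintro ⟨h1, h2⟩
    obtain ⟨a, ha⟩ := h1 0 0
    obtain ⟨b, hb⟩ := h1 0 1
    obtain ⟨c, hc⟩ := h1 1 0
    obtain ⟨d, hd⟩ := h1 1 1
    refine ⟨a, b, c, d, ?_, ?_⟩
    · ext i j
      fin_cases i <;> fin_cases j <;> simp [ha, hb, hc, hd]
    · rw [Matrix.det_fin_two, ha, hb, hc, hd] at h2
      have : ((a * d : ℕ) : ℝ) = ((b * c + 1 : ℕ) : ℝ) := by push_cast; linarith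
      exact_mod_cast this
  · rintro ⟨a, b, c, d, rfl, h⟩
    refine ⟨?_, ?_⟩
    · intro i j
      fin_cases i <;> fin_cases j
      · exact ⟨a, by simp⟩
      · exact ⟨b, by simp⟩
      · exact ⟨c, by simp⟩
      · exact ⟨d, by simp⟩
    · have hr : (a : ℝ) * d = b * c + 1 := by exact_mod_cast congrArg (Nat.cast : ℕ → ℝ) h
      rw [Matrix.det_fin_two]
      norm_num
      linarith

lemma betaTildeInv_apply (a b c d : ℝ) :
    betaTildeInv !![a, b; c, d] = !![(a - c) / 2, (a - c) / 2 + b - d; c, c + 2 * d] := by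
  simp [betaTildeInv]

lemma betaTilde_apply (a b c d : ℝ) :
    betaTilde !![a, b; c, d] = !![2 * a + c, b - a + (d - c) / 2; c, (d - c) / 2] := by
  simp [betaTilde]

set_option maxHeartbeats 1600000 in
theorem stmt7 :
    (∀ X ∈ SL2N, betaTildeInv X ∈ SL2N ↔ X ∈ SigmaUp) ∧
    (∀ M ∈ SL2N, betaTilde M ∈ SL2N ↔ M ∈ SigmaLow) := by
  constructor
  · intro X hX
    rw [sl2n_iff] at hX
    obtain ⟨a, b, c, d, rfl, hdet⟩ := hX
    have hdetZ : (a : ℤ) * d = b * c + 1 := by exact_mod_cast hdet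
    constructor
    · rintro ⟨h1, -⟩
      obtain ⟨m, hm⟩ := h1 0 0
      obtain ⟨n, hn⟩ := h1 0 1
      rw [betaTildeInv_apply] at hm hn
      simp at hm hn
      -- hm : ((a:ℝ) - c)/2 = m ; hn : ((a:ℝ)-c)/2 + b - d = n
      have hac : (a : ℤ) = c + 2 * m := by
        have : (a : ℝ) = c + 2 * m := by linarith
        exact_mod_cast this
      have hbd : (n : ℤ) + d = m + b := by
        have : (n : ℝ) + d = m + b := by linarith
        exact_mod_cast this
      have hge : d ≤ b := by
        by_contra hlt
        push_neg at hlt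
        have h1 : (d : ℤ) ≥ b + 1 := by exact_mod_cast hlt
        have h2 : (m : ℤ) ≥ d - b := by omega
        nlinarith [hdetZ, hac, h1, h2]
      refine ⟨m, b - d, c, d, ?_, ?_⟩
      · have : 2 * (m : ℤ) * d = (b - d) * c + 1 := by nlinarith [hdetZ, hac]
        have hbd' : ((b - d : ℕ) : ℤ) = (b : ℤ) - d := by
          simp [Nat.cast_sub hge]
        zify
        rw [hbd']
        linarith [this]
      · have hca : (a : ℝ) = c + 2 * m := by exact_mod_cast hac
        have hdb : (b : ℝ) = ((b - d : ℕ) : ℝ) + d := by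
          have : ((b - d : ℕ) : ℝ) = (b : ℝ) - d := by
            push_cast [Nat.cast_sub hge]; ring
          rw [this]; ring
        ext i j
        fin_cases i <;> fin_cases j <;>
          simp [Rmat, Matrix.mul_apply, Fin.sum_univ_two] <;> linarith
    · rintro ⟨b11, b12, b21, b22, heq, hX⟩
      have heqZ : 2 * (b11 : ℝ) * b22 = b12 * b21 + 1 := by exact_mod_cast heq
      have e00 : (a : ℝ) = 2 * b11 + b21 := by
        have := congrFun (congrFun hX 0) 0
        simpa [Rmat, Matrix.mul_apply, Fin.sum_univ_two] using this
      have e01 : (b : ℝ) = b12 + b22 := by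
        have := congrFun (congrFun hX 0) 1
        simpa [Rmat, Matrix.mul_apply, Fin.sum_univ_two] using this
      have e10 : (c : ℝ) = b21 := by
        have := congrFun (congrFun hX 1) 0
        simpa [Rmat, Matrix.mul_apply, Fin.sum_univ_two] using this
      have e11 : (d : ℝ) = b22 := by
        have := congrFun (congrFun hX 1) 1
        simpa [Rmat, Matrix.mul_apply, Fin.sum_univ_two] using this
      rw [betaTildeInv_apply, sl2n_iff]
      refine ⟨b11, b11 + b12, c, c + 2 * d, ?_, ?_⟩
      · ext i j
        fin_cases i <;> fin_cases j <;> push_cast <;> simp <;> linarith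
      · have : (b11 : ℝ) * (c + 2 * d) = (b11 + b12) * c + 1 := by nlinarith
        exact_mod_cast this
  · intro M hM
    rw [sl2n_iff] at hM
    obtain ⟨a, b, c, d, rfl, hdet⟩ := hM
    have hdetZ : (a : ℤ) * d = b * c + 1 := by exact_mod_cast hdet
    constructor
    · rintro ⟨h1, -⟩
      obtain ⟨m, hm⟩ := h1 1 1
      obtain ⟨n, hn⟩ := h1 0 1
      rw [betaTilde_apply] at hm hn
      simp at hm hn
      -- hm : ((d:ℝ) - c)/2 = m ; hn : b - a + ((d:ℝ)-c)/2 = n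
      have hdc : (d : ℤ) = c + 2 * m := by
        have : (d : ℝ) = c + 2 * m := by linarith
        exact_mod_cast this
      have hba : (n : ℤ) + a = b + m := by
        have : (n : ℝ) + a = b + m := by linarith
        exact_mod_cast this
      have hge : a ≤ b := by
        by_contra hlt
        push_neg at hlt
        have h1 : (a : ℤ) ≥ b + 1 := by exact_mod_cast hlt
        have h2 : (m : ℤ) ≥ a - b := by omega
        nlinarith [hdetZ, hdc, h1, h2]
      refine ⟨a, b - a, c, m, ?_, ?_⟩
      · have : 2 * (a : ℤ) * m = (b - a) * c + 1 := by nlinarith [hdetZ, hdc]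
        have hba' : ((b - a : ℕ) : ℤ) = (b : ℤ) - a := by simp [Nat.cast_sub hge]
        zify
        rw [hba']
        linarith [this]
      · have hdc' : (d : ℝ) = c + 2 * m := by exact_mod_cast hdc
        have hab : (b : ℝ) = a + ((b - a : ℕ) : ℝ) := by
          have : ((b - a : ℕ) : ℝ) = (b : ℝ) - a := by
            push_cast [Nat.cast_sub hge]; ring
          rw [this]; ring
        ext i j
        fin_cases i <;> fin_cases j <;>
          simp [Rmat, Matrix.mul_apply, Fin.sum_univ_two] <;> linarith
    · rintro ⟨b11, b12, b21, b22, heq, hX⟩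
      have heqZ : 2 * (b11 : ℝ) * b22 = b12 * b21 + 1 := by exact_mod_cast heq
      have e00 : (a : ℝ) = b11 := by
        have := congrFun (congrFun hX 0) 0
        simpa [Rmat, Matrix.mul_apply, Fin.sum_univ_two] using this
      have e01 : (b : ℝ) = b11 + b12 := by
        have := congrFun (congrFun hX 0) 1
        simpa [Rmat, Matrix.mul_apply, Fin.sum_univ_two] using this
      have e10 : (c : ℝ) = b21 := by
        have := congrFun (congrFun hX 1) 0
        simpa [Rmat, Matrix.mul_apply, Fin.sum_univ_two] using this
      have e11 : (d : ℝ) = b21 + 2 * b22 := by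
        have := congrFun (congrFun hX 1) 1
        simpa [Rmat, Matrix.mul_apply, Fin.sum_univ_two] using this
      rw [betaTilde_apply, sl2n_iff]
      refine ⟨2 * a + c, b12 + b22, c, b22, ?_, ?_⟩
      · ext i j
        fin_cases i <;> fin_cases j <;> push_cast <;> simp <;> linarith
      · have : ((2 * a + c : ℕ) : ℝ) * b22 = (b12 + b22) * c + 1 := by push_cast; nlinarith
        exact_mod_cast this
end

section
/- Let β̃ send [[a11,a12],[a21,a22]] to [[2a11+a21, a12−a11+(a22−a21)/2],[a21,(a22−a21)/2]] and let δ flip the main diagonal. Then the diagram commutes on Σ_2: for every M ∈ Σ_2, δ(β̃(M)) ∈ Σ_2 and β̃(δ(β̃(M))) = δ(M). Equivalently, β̃ ∘ δ ∘ β̃ = δ on Σ_2. -/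
/-- The main-diagonal flip `δ`. -/
def deltaFlip (M : Matrix (Fin 2) (Fin 2) ℝ) : Matrix (Fin 2) (Fin 2) ℝ :=
  !![M 1 1, M 0 1; M 1 0, M 0 0]

theorem stmt9 (M : Matrix (Fin 2) (Fin 2) ℝ) (hM : M ∈ SigmaLow) :
    deltaFlip (betaTilde M) ∈ SigmaLow ∧
    betaTilde (deltaFlip (betaTilde M)) = deltaFlip M := by
  obtain ⟨b11, b12, b21, b22, hdet, rfl⟩ := hM
  constructor
  · refine ⟨b22, b12, b21, b11, by linarith, ?_⟩
    ext i j
    fin_cases i <;> fin_cases j <;>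
      simp [betaTilde, deltaFlip, Rmat, Matrix.mul_fin_two] <;> ring
  · ext i j
    fin_cases i <;> fin_cases j <;>
      simp [betaTilde, deltaFlip, Rmat, Matrix.mul_fin_two] <;> ring
end
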